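/- Graph reduction for compound channels preserves shortest cycles: let V = {(k, l_k) : k ∈ ⟨K⟩, l_k ∈ ⟨L_k⟩} ∪ {u} with edge lengths l((k,l_k),(k,l_k')) = 0, l((k,l_k),(j,l_j)) = (α_{kk}^{[l_k]} − α_{kj}^{[l_k]}) − d_k for j ≠ k, l((k,l_k),u) = α_{kk}^{[l_k]} − d_k, l(u,(k,l_k)) = 0; and let V̄ = ⟨K⟩ ∪ {u} with l̄(k,j) = min_{l_k}(α_{kk}^{[l_k]} − α_{kj}^{[l_k]}) − d_k for j ≠ k, l̄(k,u) = min_{l_k} α_{kk}^{[l_k]} − d_k, l̄(u,k) = 0. Then every directed cycle in the first graph has nonnegative length if and only if every directed cycle in the second graph has nonnegative length. -/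

import Mathlib

/-!
Collapsing the states of each user projects every cycle of the compound graph onto a cycle of
the reduced graph that is no longer, because each reduced edge is the minimum over the states of
its tail. Conversely, a cycle of the reduced graph lifts to a cycle of the same length: at each
vertex `k` choose the state minimising the edge towards the next vertex of the cycle, which is
possible since the length of an edge `(k, l_k) → x` depends on `x` only through its user.
-/

def NonnegCycles {V : Type*} (l : V → V → ℝ) : Prop :=
  ∀ (m : ℕ) (c : Fin (m + 1) → V), c 0 = c (Fin.last m) →
    0 ≤ ∑ i : Fin m, l (c i.castSucc) (c i.succ)

section CycleTransfer

variable {V W : Type*} {lV : V → V → ℝ} {lW : W → W → ℝ}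

theorem NonnegCycles.of_map_le (p : V → W) (hp : ∀ a b, lW (p a) (p b) ≤ lV a b)
    (h : NonnegCycles lW) : NonnegCycles lV := fun m c hc =>
  (h m (p ∘ c) (congrArg p hc)).trans (Finset.sum_le_sum fun _ _ => hp _ _)

theorem NonnegCycles.of_lift (p : V → W)
    (hlift : ∀ v t, ∃ y, p y = v ∧ ∀ x, p x = t → lV y x ≤ lW v t)
    (h : NonnegCycles lV) : NonnegCycles lW := by
  choose s hsp hsle using hlift
  rintro (_ | m) c hc
  · simp
  -- The lift of the closing vertex repeats that of the first one.
  let f : Fin (m + 2) → V :=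
    Fin.lastCases (s (c 0) (c 1)) fun i => s (c i.castSucc) (c i.succ)
  have hpf : ∀ i, p (f i) = c i := by
    refine Fin.lastCases ?_ fun i => ?_
    · simp [f, hsp, hc]
    · simp [f, hsp]
  have hf : f 0 = f (Fin.last _) := by
    change f (Fin.castSucc 0) = _
    simp only [f, Fin.lastCases_castSucc, Fin.lastCases_last]
    rfl
  calc 0 ≤ ∑ i : Fin (m + 1), lV (f i.castSucc) (f i.succ) := h _ f hf
    _ ≤ ∑ i : Fin (m + 1), lW (c i.castSucc) (c i.succ) := Finset.sum_le_sum fun i _ => by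
        simpa [f] using hsle (c i.castSucc) (c i.succ) (f i.succ) (hpf _)

end CycleTransfer

section CompoundChannel

variable {K : ℕ} {S : Fin K → Type} (α : (k : Fin K) → S k → Fin K → ℝ) (d : Fin K → ℝ)

abbrev forgetState : (Σ k : Fin K, S k) ⊕ Unit → Fin K ⊕ Unit := Sum.map Sigma.fst id

/-- The length of an edge leaving `(k, l)` in the compound graph, as a function of the user of its
head (`.inr ()` standing for `u`). -/
def stateLen (k : Fin K) (l : S k) : Fin K ⊕ Unit → ℝ
  | .inl j => if k = j then 0 else α k l k - α k l j - d k
  | .inr () => α k l k - d k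

def compoundLen : (Σ k : Fin K, S k) ⊕ Unit → (Σ k : Fin K, S k) ⊕ Unit → ℝ
  | .inl ⟨k, l⟩, x => stateLen α d k l (forgetState x)
  | .inr (), _ => 0

noncomputable def reducedLen : Fin K ⊕ Unit → Fin K ⊕ Unit → ℝ
  | .inl k, t => ⨅ l, stateLen α d k l t
  | .inr (), _ => 0

variable [∀ k, Finite (S k)]

theorem reducedLen_forgetState_le (a b : (Σ k : Fin K, S k) ⊕ Unit) :
    reducedLen α d (forgetState a) (forgetState b) ≤ compoundLen α d a b := by
  rcases a with ⟨k, l⟩ | ⟨⟩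
  · exact ciInf_le (Set.finite_range _).bddBelow l
  · exact le_rfl

theorem exists_compoundLen_le_reducedLen [∀ k, Nonempty (S k)] (v t : Fin K ⊕ Unit) :
    ∃ y, forgetState y = v ∧
      ∀ x, forgetState x = t → compoundLen α d y x ≤ reducedLen α d v t := by
  rcases v with k | ⟨⟩
  · obtain ⟨l, hl⟩ := exists_eq_ciInf_of_finite (f := fun l => stateLen α d k l t)
    exact ⟨.inl ⟨k, l⟩, rfl, fun x hx => by simp [compoundLen, reducedLen, hx, ← hl]⟩
  · exact ⟨.inr (), rfl, fun _ _ => le_rfl⟩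

end CompoundChannel

theorem compound_regular_graph_reduction_general
    (K : ℕ) (S : Fin K → Type) [∀ k, Fintype (S k)] [∀ k, Nonempty (S k)]
    (α : (k : Fin K) → S k → Fin K → ℝ) (d : Fin K → ℝ)
    (len1 : ((Σ k : Fin K, S k) ⊕ Unit) → ((Σ k : Fin K, S k) ⊕ Unit) → ℝ)
    (len2 : (Fin K ⊕ Unit) → (Fin K ⊕ Unit) → ℝ)
    (h1a : ∀ (k : Fin K) (lk lk' : S k), len1 (.inl ⟨k, lk⟩) (.inl ⟨k, lk'⟩) = 0)
    (h1b : ∀ (k j : Fin K) (lk : S k) (lj : S j), k ≠ j →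
      len1 (.inl ⟨k, lk⟩) (.inl ⟨j, lj⟩) = (α k lk k - α k lk j) - d k)
    (h1c : ∀ (k : Fin K) (lk : S k), len1 (.inl ⟨k, lk⟩) (.inr ()) = α k lk k - d k)
    (h1d : ∀ (k : Fin K) (lk : S k), len1 (.inr ()) (.inl ⟨k, lk⟩) = 0)
    (h1e : len1 (.inr ()) (.inr ()) = 0)
    (h2a : ∀ k : Fin K, len2 (.inl k) (.inl k) = 0)
    (h2b : ∀ k j : Fin K, k ≠ j →
      len2 (.inl k) (.inl j) = (⨅ lk : S k, (α k lk k - α k lk j)) - d k)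
    (h2c : ∀ k : Fin K, len2 (.inl k) (.inr ()) = (⨅ lk : S k, α k lk k) - d k)
    (h2d : ∀ k : Fin K, len2 (.inr ()) (.inl k) = 0)
    (h2e : len2 (.inr ()) (.inr ()) = 0) :
    (∀ (m : ℕ) (c : Fin (m + 1) → ((Σ k : Fin K, S k) ⊕ Unit)), c 0 = c (Fin.last m) →
        0 ≤ ∑ i : Fin m, len1 (c i.castSucc) (c i.succ)) ↔
    (∀ (m : ℕ) (c : Fin (m + 1) → (Fin K ⊕ Unit)), c 0 = c (Fin.last m) →
        0 ≤ ∑ i : Fin m, len2 (c i.castSucc) (c i.succ)) := by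
  have hlen1 : len1 = compoundLen α d := by
    funext a b
    rcases a with ⟨k, l⟩ | ⟨⟩ <;> rcases b with ⟨j, l'⟩ | ⟨⟩
    · by_cases hkj : k = j
      · subst hkj
        simp [compoundLen, stateLen, h1a]
      · simp [compoundLen, stateLen, h1b _ _ _ _ hkj, hkj]
    · simp [compoundLen, stateLen, h1c]
    · simp [compoundLen, h1d]
    · simp [compoundLen, h1e]
  have hlen2 : len2 = reducedLen α d := by
    funext v t
    rcases v with k | ⟨⟩ <;> rcases t with j | ⟨⟩
    · by_cases hkj : k = j
      · subst hkj
        simp [reducedLen, stateLen, h2a]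
      · simp [reducedLen, stateLen, h2b _ _ hkj, hkj, ciInf_sub (Set.finite_range _).bddBelow]
    · simp [reducedLen, stateLen, h2c, ciInf_sub (Set.finite_range _).bddBelow]
    · simp [reducedLen, h2d]
    · simp [reducedLen, h2e]
  subst hlen1 hlen2
  exact ⟨NonnegCycles.of_lift forgetState (exists_compoundLen_le_reducedLen α d),
    NonnegCycles.of_map_le forgetState (reducedLen_forgetState_le α d)⟩

theorem compound_regular_graph_reduction
    (K : ℕ) (hK : 1 ≤ K) (S : Fin K → Type) [∀ k, Fintype (S k)] [∀ k, Nonempty (S k)]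
    (α : (k : Fin K) → S k → Fin K → ℝ) (d : Fin K → ℝ)
    (len1 : ((Σ k : Fin K, S k) ⊕ Unit) → ((Σ k : Fin K, S k) ⊕ Unit) → ℝ)
    (len2 : (Fin K ⊕ Unit) → (Fin K ⊕ Unit) → ℝ)
    (h1a : ∀ (k : Fin K) (lk lk' : S k), len1 (.inl ⟨k, lk⟩) (.inl ⟨k, lk'⟩) = 0)
    (h1b : ∀ (k j : Fin K) (lk : S k) (lj : S j), k ≠ j →
      len1 (.inl ⟨k, lk⟩) (.inl ⟨j, lj⟩) = (α k lk k - α k lk j) - d k)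
    (h1c : ∀ (k : Fin K) (lk : S k), len1 (.inl ⟨k, lk⟩) (.inr ()) = α k lk k - d k)
    (h1d : ∀ (k : Fin K) (lk : S k), len1 (.inr ()) (.inl ⟨k, lk⟩) = 0)
    (h1e : len1 (.inr ()) (.inr ()) = 0)
    (h2a : ∀ k : Fin K, len2 (.inl k) (.inl k) = 0)
    (h2b : ∀ k j : Fin K, k ≠ j →
      len2 (.inl k) (.inl j) = (⨅ lk : S k, (α k lk k - α k lk j)) - d k)
    (h2c : ∀ k : Fin K, len2 (.inl k) (.inr ()) = (⨅ lk : S k, α k lk k) - d k)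
    (h2d : ∀ k : Fin K, len2 (.inr ()) (.inl k) = 0)
    (h2e : len2 (.inr ()) (.inr ()) = 0) :
    (∀ (m : ℕ) (c : Fin (m + 1) → ((Σ k : Fin K, S k) ⊕ Unit)), c 0 = c (Fin.last m) →
        0 ≤ ∑ i : Fin m, len1 (c i.castSucc) (c i.succ)) ↔
    (∀ (m : ℕ) (c : Fin (m + 1) → (Fin K ⊕ Unit)), c 0 = c (Fin.last m) →
        0 ≤ ∑ i : Fin m, len2 (c i.castSucc) (c i.succ)) :=
  compound_regular_graph_reduction_general K S α d len1 len2 h1a h1b h1c h1d h1e h2a h2b h2c h2d h2e
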